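/- Let Q_ε be symmetric positive definite, p ∈ ℝ^N, and let Ω̂ = {v ≥ 0 : v_j = 0 for all j ∉ J} for a fixed index set J ⊆ {1,…,N}. Suppose there exists w̃ ∈ Ω̂ with pᵀw̃ > 0, and let v* be the (unique, by strict convexity) global minimizer of f(v) = ½ vᵀQ_ε v − pᵀv over the closed convex set Ω̂. Then v* ≠ 0, pᵀv* = (v*)ᵀQ_ε v* > 0, and w* := v*/(v*ᵀ1) maximizes S(w) = pᵀw / √(wᵀQ_ε w) over Ω̂₁ := {w ∈ Ω̂ : wᵀ1 = 1}. -/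

import Mathlib

open Matrix Finset

/-!
Write `f v = ½ vᵀQv - pᵀv`. Along a ray `t ↦ t • v` of the cone `Ω̂`, `f` is a quadratic in `t ≥ 0`
with minimum `-(pᵀv)² / (2 vᵀQv)` whenever `pᵀv ≥ 0`; since `v*` minimizes `f` over the whole cone,
`(pᵀv)² ≤ -2 f(v*) · vᵀQv` for every `v ∈ Ω̂`. Taking `v = w̃` gives `f(v*) < 0`, so `v* ≠ 0`;
taking `v = v*` forces `pᵀv* = v*ᵀQv*`, hence `-2 f(v*) = v*ᵀQv*`, and the inequality becomes
`S(v) ≤ √(v*ᵀQv*) = S(v*)`. Finally `S` is invariant under positive scaling, so normalizing `v*`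
does not change its ratio.
-/

variable {ι : Type*} [Fintype ι]

noncomputable def quadObjective (Q : Matrix ι ι ℝ) (p v : ι → ℝ) : ℝ :=
  1 / 2 * (v ⬝ᵥ Q *ᵥ v) - p ⬝ᵥ v

noncomputable def sharpeRatio (Q : Matrix ι ι ℝ) (p w : ι → ℝ) : ℝ :=
  p ⬝ᵥ w / √(w ⬝ᵥ Q *ᵥ w)

lemma smul_dotProduct_mulVec_smul (Q : Matrix ι ι ℝ) (t : ℝ) (v : ι → ℝ) :
    t • v ⬝ᵥ Q *ᵥ (t • v) = t ^ 2 * (v ⬝ᵥ Q *ᵥ v) := by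
  rw [mulVec_smul, smul_dotProduct, dotProduct_smul, smul_eq_mul, smul_eq_mul]
  ring

lemma quadObjective_smul (Q : Matrix ι ι ℝ) (p v : ι → ℝ) (t : ℝ) :
    quadObjective Q p (t • v) = 1 / 2 * t ^ 2 * (v ⬝ᵥ Q *ᵥ v) - t * (p ⬝ᵥ v) := by
  rw [quadObjective, smul_dotProduct_mulVec_smul, dotProduct_smul, smul_eq_mul]
  ring

lemma sharpeRatio_smul (Q : Matrix ι ι ℝ) (p v : ι → ℝ) {t : ℝ} (ht : 0 < t) :
    sharpeRatio Q p (t • v) = sharpeRatio Q p v := by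
  rw [sharpeRatio, sharpeRatio, smul_dotProduct_mulVec_smul, dotProduct_smul, smul_eq_mul,
    Real.sqrt_mul (sq_nonneg t), Real.sqrt_sq ht.le, mul_div_mul_left _ _ ht.ne']

lemma sharpeRatio_of_dotProduct_eq {Q : Matrix ι ι ℝ} {p v : ι → ℝ}
    (h : p ⬝ᵥ v = v ⬝ᵥ Q *ᵥ v) : sharpeRatio Q p v = √(v ⬝ᵥ Q *ᵥ v) := by
  rw [sharpeRatio, h, Real.div_sqrt]

section IsMinOnCone

variable {Q : Matrix ι ι ℝ} {p vs : ι → ℝ} {K : Set (ι → ℝ)}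

/-- The bound comes from comparing `vs` with the minimizer `((pᵀv) / (vᵀQv)) • v` of `f` on
the ray through `v`. -/
lemma sq_dotProduct_le_of_isMinOn (hK : ∀ t : ℝ, 0 ≤ t → ∀ v ∈ K, t • v ∈ K)
    (hmin : IsMinOn (quadObjective Q p) K vs) {v : ι → ℝ} (hv : v ∈ K)
    (hq : 0 < v ⬝ᵥ Q *ᵥ v) (hl : 0 ≤ p ⬝ᵥ v) :
    (p ⬝ᵥ v) ^ 2 ≤ -2 * quadObjective Q p vs * (v ⬝ᵥ Q *ᵥ v) := by
  have h := isMinOn_iff.mp hmin _ (hK _ (div_nonneg hl hq.le) v hv)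
  have hray : quadObjective Q p (((p ⬝ᵥ v) / (v ⬝ᵥ Q *ᵥ v)) • v) =
      -((p ⬝ᵥ v) ^ 2 / (2 * (v ⬝ᵥ Q *ᵥ v))) := by
    rw [quadObjective_smul]
    field_simp
    ring
  rw [hray, le_neg, div_le_iff₀ (by positivity)] at h
  linarith

lemma quadObjective_neg_of_isMinOn (hK : ∀ t : ℝ, 0 ≤ t → ∀ v ∈ K, t • v ∈ K)
    (hmin : IsMinOn (quadObjective Q p) K vs) {w : ι → ℝ} (hw : w ∈ K)
    (hq : 0 < w ⬝ᵥ Q *ᵥ w) (hl : 0 < p ⬝ᵥ w) :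
    quadObjective Q p vs < 0 := by
  have h := sq_dotProduct_le_of_isMinOn hK hmin hw hq hl.le
  nlinarith [pow_pos hl 2]

lemma dotProduct_eq_of_isMinOn (hK : ∀ t : ℝ, 0 ≤ t → ∀ v ∈ K, t • v ∈ K)
    (hmin : IsMinOn (quadObjective Q p) K vs) (hvs : vs ∈ K) (hq : 0 < vs ⬝ᵥ Q *ᵥ vs) :
    p ⬝ᵥ vs = vs ⬝ᵥ Q *ᵥ vs := by
  have hzero : quadObjective Q p vs ≤ 0 := by
    simpa [quadObjective] using isMinOn_iff.mp hmin _ (hK 0 le_rfl vs hvs)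
  have hl : 0 ≤ p ⬝ᵥ vs := by
    rw [quadObjective] at hzero
    linarith
  have h := sq_dotProduct_le_of_isMinOn hK hmin hvs hq hl
  rw [quadObjective] at h
  nlinarith [sq_nonneg (p ⬝ᵥ vs - vs ⬝ᵥ Q *ᵥ vs)]

lemma sharpeRatio_le_of_isMinOn (hK : ∀ t : ℝ, 0 ≤ t → ∀ v ∈ K, t • v ∈ K)
    (hmin : IsMinOn (quadObjective Q p) K vs) {w : ι → ℝ} (hw : w ∈ K)
    (hq : 0 < w ⬝ᵥ Q *ᵥ w) :
    sharpeRatio Q p w ≤ √(-2 * quadObjective Q p vs) := by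
  rcases le_or_gt (p ⬝ᵥ w) 0 with hl | hl
  · exact (div_nonpos_of_nonpos_of_nonneg hl (Real.sqrt_nonneg _)).trans (Real.sqrt_nonneg _)
  rw [sharpeRatio, div_le_iff₀ (Real.sqrt_pos.2 hq), ← Real.sqrt_mul' _ hq.le]
  exact Real.le_sqrt_of_sq_le (sq_dotProduct_le_of_isMinOn hK hmin hw hq hl.le)

end IsMinOnCone

theorem stmt_17 (N : ℕ) (Q : Matrix (Fin N) (Fin N) ℝ) (hQ : Q.PosDef)
    (p : Fin N → ℝ) (J : Finset (Fin N))
    (Ωhat Ωhat₁ : Set (Fin N → ℝ))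
    (hΩhat : Ωhat = {v | (∀ i, 0 ≤ v i) ∧ ∀ j ∉ J, v j = 0})
    (hΩhat₁ : Ωhat₁ = {w ∈ Ωhat | (∑ i, w i) = 1})
    (hexist : ∃ w ∈ Ωhat, 0 < p ⬝ᵥ w)
    (vs : Fin N → ℝ) (hvs : vs ∈ Ωhat)
    (hmin : ∀ v ∈ Ωhat,
      (1/2) * (vs ⬝ᵥ Q.mulVec vs) - p ⬝ᵥ vs ≤ (1/2) * (v ⬝ᵥ Q.mulVec v) - p ⬝ᵥ v) :
    vs ≠ 0 ∧ p ⬝ᵥ vs = vs ⬝ᵥ Q.mulVec vs ∧ 0 < p ⬝ᵥ vs ∧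
    (∑ i, vs i)⁻¹ • vs ∈ Ωhat₁ ∧
    ∀ w ∈ Ωhat₁,
      p ⬝ᵥ w / Real.sqrt (w ⬝ᵥ Q.mulVec w) ≤
        p ⬝ᵥ ((∑ i, vs i)⁻¹ • vs) /
          Real.sqrt (((∑ i, vs i)⁻¹ • vs) ⬝ᵥ Q.mulVec ((∑ i, vs i)⁻¹ • vs)) := by
  subst hΩhat₁
  have hmin' : IsMinOn (quadObjective Q p) Ωhat vs := isMinOn_iff.mpr hmin
  have hcone : ∀ t : ℝ, 0 ≤ t → ∀ v ∈ Ωhat, t • v ∈ Ωhat := by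
    subst hΩhat
    exact fun t ht v hv => ⟨fun i => mul_nonneg ht (hv.1 i), fun j hj => by simp [hv.2 j hj]⟩
  have hqpos : ∀ v : Fin N → ℝ, v ≠ 0 → 0 < v ⬝ᵥ Q *ᵥ v := fun v hv => by
    simpa using hQ.dotProduct_mulVec_pos hv
  obtain ⟨w₀, hw₀, hpw₀⟩ := hexist
  have hw₀_ne : w₀ ≠ 0 := by rintro rfl; simp at hpw₀
  have hvs_ne : vs ≠ 0 := by
    rintro rfl
    exact (quadObjective_neg_of_isMinOn hcone hmin' hw₀ (hqpos w₀ hw₀_ne) hpw₀).ne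
      (by simp [quadObjective])
  have hvs_nonneg : 0 ≤ vs := fun i => (hΩhat ▸ hvs).1 i
  have hsum : 0 < ∑ i, vs i := Fintype.sum_pos (lt_of_le_of_ne hvs_nonneg (Ne.symm hvs_ne))
  have heq := dotProduct_eq_of_isMinOn hcone hmin' hvs (hqpos vs hvs_ne)
  refine ⟨hvs_ne, heq, heq ▸ hqpos vs hvs_ne,
    ⟨hcone _ (inv_nonneg.2 hsum.le) vs hvs, by simp [← Finset.mul_sum, hsum.ne']⟩,
    fun w ⟨hw, hw_sum⟩ => ?_⟩
  have hw_ne : w ≠ 0 := by rintro rfl; simp at hw_sum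
  change sharpeRatio Q p w ≤ sharpeRatio Q p _
  rw [sharpeRatio_smul Q p vs (inv_pos.2 hsum), sharpeRatio_of_dotProduct_eq heq]
  calc sharpeRatio Q p w ≤ √(-2 * quadObjective Q p vs) :=
        sharpeRatio_le_of_isMinOn hcone hmin' hw (hqpos w hw_ne)
    _ = √(vs ⬝ᵥ Q *ᵥ vs) := by rw [quadObjective, heq]; ring_nf
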